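/- arXiv:1404.2463 — 2 statements merged into one kernel-verified Lean document; each statement's English description precedes it below -/
import Mathlib

section
/- Let ρ > 1 and let f be analytic inside and on the Bernstein ellipse E_ρ. Then for every integer n ≥ 0, the n-th Chebyshev coefficient of the second kind of f satisfies b_n = (1/(2π ρ^n)) ∫_0^{2π} f(½(ρe^{iθ} + (ρe^{iθ})^{-1})) (1 - (ρe^{iθ})^{-2}) e^{-inθ} dθ. -/
/-!
Substituting `x = cos θ` gives `b_n = (2/π) ∫₀^π f(cos θ) sin θ sin((n+1)θ) dθ`. The contour
integral is `i⁻¹ ρⁿ ∮_{|z|=ρ} f((z + z⁻¹)/2) (1 - z⁻²) z⁻ⁿ⁻¹ dz`; the Joukowski map sends the annulus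
`1 ≤ |z| ≤ ρ` into `D̄_ρ`, so by Cauchy's theorem the circle may be shrunk to `|z| = 1`. There
`(1 - z⁻²) z⁻ⁿ = 2i sin θ e^{-i(n+1)θ}` with `z = e^{iθ}`, and since `f(cos θ) sin θ` is odd about
`θ = π`, only the sine part of `e^{-i(n+1)θ}` survives, leaving `4 ∫₀^π f(cos θ) sin θ sin((n+1)θ) dθ`.
-/

open Complex Real MeasureTheory Polynomial

noncomputable section

/-- The point ½(u + u⁻¹) for u = r·e^{iθ}. -/
def joukowski (r θ : ℝ) : ℂ :=
  ((r : ℂ) * Complex.exp (θ * Complex.I) +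
    ((r : ℂ) * Complex.exp (θ * Complex.I))⁻¹) / 2

/-- The Bernstein ellipse E_ρ (the curve). -/
def bernsteinEllipse (ρ : ℝ) : Set ℂ := {z | ∃ θ : ℝ, z = joukowski ρ θ}

/-- The closed interior D̄_ρ of the Bernstein ellipse. -/
def bernsteinDisk (ρ : ℝ) : Set ℂ :=
  {z | ∃ r θ : ℝ, 1 ≤ r ∧ r ≤ ρ ∧ z = joukowski r θ}

/-- `f` is analytic inside and on the Bernstein ellipse `E_ρ`:
analytic on an open set containing the closed interior `D̄_ρ`. -/
def AnalyticOnBernstein (f : ℂ → ℂ) (ρ : ℝ) : Prop :=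
  ∃ U : Set ℂ, IsOpen U ∧ bernsteinDisk ρ ⊆ U ∧ ∀ z ∈ U, AnalyticAt ℂ f z

/-- The n-th Chebyshev coefficient of the first kind of f:
aₙ = (2/π) ∫_{-1}^1 f(x) Tₙ(x)/√(1-x²) dx. -/
def chebCoeffT (f : ℂ → ℂ) (n : ℕ) : ℂ :=
  (2 / π) * ∫ x in (-1:ℝ)..1,
    f x * ((Polynomial.Chebyshev.T ℝ n).eval x / Real.sqrt (1 - x ^ 2) : ℝ)

/-- The n-th Chebyshev coefficient of the second kind of f:
bₙ = (2/π) ∫_{-1}^1 √(1-x²) f(x) Uₙ(x) dx. -/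
def chebCoeffU (f : ℂ → ℂ) (n : ℕ) : ℂ :=
  (2 / π) * ∫ x in (-1:ℝ)..1,
    f x * ((Real.sqrt (1 - x ^ 2) * (Polynomial.Chebyshev.U ℝ n).eval x : ℝ))

/-- The m-point trapezoidal approximation aₙ(m,ρ) of the contour formula for aₙ. -/
def trapT (f : ℂ → ℂ) (ρ : ℝ) (n m : ℕ) : ℂ :=
  (2 / (m * ρ ^ n)) * ∑ j ∈ Finset.range m,
    f (joukowski ρ (2 * π * j / m)) * Complex.exp (-(2 * π * j * n / m) * Complex.I)

/-- The m-point trapezoidal approximation bₙ(m,ρ) of the contour formula for bₙ. -/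
def trapU (f : ℂ → ℂ) (ρ : ℝ) (n m : ℕ) : ℂ :=
  (1 / (m * ρ ^ n)) * ∑ j ∈ Finset.range m,
    f (joukowski ρ (2 * π * j / m)) *
      (1 - (ρ:ℂ)⁻¹ ^ 2 * Complex.exp (-(4 * π * j / m) * Complex.I)) *
      Complex.exp (-(2 * π * j * n / m) * Complex.I)

/-- The supremum norm ‖g‖_{E_ρ} of g on the Bernstein ellipse E_ρ. -/
def ellipseNorm (g : ℂ → ℂ) (ρ : ℝ) : ℝ :=
  sSup ((fun z => ‖g z‖) '' bernsteinEllipse ρ)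

/-- The polynomial s(z) = η₀/2 + ∑_{k=1}^{m-1} ηₖ Tₖ(z) of degree ≤ m−1 in Chebyshev form. -/
def chebPoly (η : ℕ → ℂ) (m : ℕ) (z : ℂ) : ℂ :=
  η 0 / 2 + ∑ k ∈ Finset.Icc 1 (m - 1), η k * (Polynomial.Chebyshev.T ℂ k).eval z

/-- M(ρ) = (1/π) ∫₀^{2π} |f(½(ρe^{iθ}+(ρe^{iθ})⁻¹))| dθ. -/
def Mfun (f : ℂ → ℂ) (ρ : ℝ) : ℝ :=
  (1 / π) * ∫ θ in (0:ℝ)..(2 * π), ‖f (joukowski ρ θ)‖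

theorem joukowski_one (θ : ℝ) : joukowski 1 θ = Real.cos θ := by
  rw [joukowski, ofReal_one, one_mul, ← Complex.exp_neg, ofReal_cos, Complex.cos, neg_mul]

theorem joukowski_norm_arg (z : ℂ) : joukowski ‖z‖ (arg z) = (z + z⁻¹) / 2 := by
  rw [joukowski, norm_mul_exp_arg_mul_I]

theorem add_inv_div_two_mem_bernsteinDisk {ρ : ℝ} {z : ℂ} (h1 : 1 ≤ ‖z‖) (hρ : ‖z‖ ≤ ρ) :
    (z + z⁻¹) / 2 ∈ bernsteinDisk ρ :=
  ⟨‖z‖, arg z, h1, hρ, (joukowski_norm_arg z).symm⟩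

theorem ofReal_mem_bernsteinDisk {ρ x : ℝ} (hρ : 1 ≤ ρ) (hx : x ∈ Set.Icc (-1) 1) :
    (x : ℂ) ∈ bernsteinDisk ρ :=
  ⟨1, arccos x, le_rfl, hρ, by rw [joukowski_one, cos_arccos hx.1 hx.2]⟩

namespace AnalyticOnBernstein

variable {f : ℂ → ℂ} {ρ : ℝ}

theorem analyticAt (hf : AnalyticOnBernstein f ρ) {z : ℂ} (hz : z ∈ bernsteinDisk ρ) :
    AnalyticAt ℂ f z :=
  let ⟨_, _, hDU, hU⟩ := hf
  hU z (hDU hz)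

theorem continuousOn_Icc (hf : AnalyticOnBernstein f ρ) (hρ : 1 ≤ ρ) :
    ContinuousOn (fun x : ℝ => f x) (Set.Icc (-1) 1) := fun _ hx =>
  ((hf.analyticAt (ofReal_mem_bernsteinDisk hρ hx)).continuousAt.comp
    continuous_ofReal.continuousAt).continuousWithinAt

theorem differentiableAt_comp_add_inv_div_two (hf : AnalyticOnBernstein f ρ) {z : ℂ}
    (h1 : 1 ≤ ‖z‖) (hρ : ‖z‖ ≤ ρ) : DifferentiableAt ℂ (fun w => f ((w + w⁻¹) / 2)) z := by
  have hz : z ≠ 0 := norm_pos_iff.1 (one_pos.trans_le h1)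
  exact (hf.analyticAt (add_inv_div_two_mem_bernsteinDisk h1 hρ)).differentiableAt.comp z
    ((differentiableAt_id.add (differentiableAt_inv hz)).div_const 2)

end AnalyticOnBernstein

theorem integral_neg_one_one_eq_integral_sin_smul_comp_cos {E : Type*} [NormedAddCommGroup E]
    [NormedSpace ℝ E] {g : ℝ → E} (hg : ContinuousOn g (Set.Icc (-1) 1)) :
    ∫ x in (-1 : ℝ)..1, g x = ∫ θ in (0 : ℝ)..π, Real.sin θ • g (Real.cos θ) := by
  have hcos : Real.cos '' Set.uIcc π 0 ⊆ Set.Icc (-1) 1 := by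
    rintro _ ⟨θ, -, rfl⟩
    exact ⟨neg_one_le_cos θ, cos_le_one θ⟩
  have h := intervalIntegral.integral_deriv_smul_comp' (fun θ _ => hasDerivAt_cos θ)
    continuous_sin.neg.continuousOn (hg.mono hcos)
  rw [Real.cos_pi, Real.cos_zero] at h
  rw [← h, intervalIntegral.integral_symm]
  simp [neg_smul, intervalIntegral.integral_neg]

theorem chebCoeffU_eq_integral_sin_mul_sin {f : ℂ → ℂ}
    (hf : ContinuousOn (fun x : ℝ => f x) (Set.Icc (-1) 1)) (n : ℕ) :
    chebCoeffU f n = 2 / π * ∫ θ in (0 : ℝ)..π,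
      f (Real.cos θ) * (Real.sin θ : ℂ) * (Real.sin ((n + 1) * θ) : ℂ) := by
  have hcont : Continuous fun x : ℝ => Real.sqrt (1 - x ^ 2) * (Chebyshev.U ℝ n).eval x := by
    fun_prop
  rw [chebCoeffU, integral_neg_one_one_eq_integral_sin_smul_comp_cos
    (g := fun x : ℝ => f x * ((Real.sqrt (1 - x ^ 2) * (Chebyshev.U ℝ n).eval x : ℝ) : ℂ))
    (hf.mul (continuous_ofReal.comp hcont).continuousOn)]
  congr 1
  refine intervalIntegral.integral_congr fun θ hθ => ?_
  rw [Set.uIcc_of_le pi_pos.le] at hθ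
  have hU := Chebyshev.U_real_cos θ n
  push_cast at hU
  rw [← sin_eq_sqrt_one_sub_cos_sq hθ.1 hθ.2, mul_comm (Real.sin θ), hU, Complex.real_smul]
  ring

theorem intervalIntegral.integral_zero_two_mul_eq_integral_add_reflect {E : Type*}
    [NormedAddCommGroup E] [NormedSpace ℝ E] {h : ℝ → E} (hc : Continuous h) (a : ℝ) :
    ∫ θ in (0 : ℝ)..2 * a, h θ = ∫ θ in (0 : ℝ)..a, (h θ + h (2 * a - θ)) := by
  have hreflect : ∫ θ in (0 : ℝ)..a, h (2 * a - θ) = ∫ θ in a..2 * a, h θ := by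
    rw [intervalIntegral.integral_comp_sub_left h, sub_zero, two_mul, add_sub_cancel_right]
  have hc' : Continuous fun θ => h (2 * a - θ) := by fun_prop
  rw [intervalIntegral.integral_add (hc.intervalIntegrable _ _) (hc'.intervalIntegrable _ _),
    hreflect,
    intervalIntegral.integral_add_adjacent_intervals (hc.intervalIntegrable _ _)
      (hc.intervalIntegrable _ _)]

theorem exp_neg_nat_mul_mul_I (k : ℕ) (θ : ℝ) :
    Complex.exp (-((k : ℂ) * θ) * I) = (Complex.exp (θ * I))⁻¹ ^ k := by
  rw [← Complex.exp_neg, ← Complex.exp_nat_mul]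
  ring_nf

theorem exp_neg_mul_I_sub_exp_mul_I (z : ℂ) :
    Complex.exp (-z * I) - Complex.exp (z * I) = -2 * I * Complex.sin z := by
  rw [Complex.sin]
  ring_nf
  rw [I_sq]
  ring

theorem integral_mul_exp_neg_nat_mul_of_reflect_neg {h : ℝ → ℂ} (hc : Continuous h)
    (hodd : ∀ θ, h (2 * π - θ) = -h θ) (k : ℕ) :
    ∫ θ in (0 : ℝ)..2 * π, h θ * Complex.exp (-((k : ℂ) * θ) * I) =
      -2 * I * ∫ θ in (0 : ℝ)..π, h θ * (Real.sin (k * θ) : ℂ) := by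
  rw [intervalIntegral.integral_zero_two_mul_eq_integral_add_reflect (by fun_prop),
    ← intervalIntegral.integral_const_mul]
  refine intervalIntegral.integral_congr fun θ _ => ?_
  have hper : Complex.exp (-((k : ℂ) * ↑(2 * π - θ)) * I) = Complex.exp ((k * θ : ℂ) * I) := by
    rw [Complex.exp_eq_exp_iff_exists_int]
    exact ⟨-k, by push_cast; ring⟩
  have hsin := exp_neg_mul_I_sub_exp_mul_I (k * θ)
  rw [hodd, hper]
  push_cast at hsin ⊢
  linear_combination h θ * hsin

theorem one_sub_exp_inv_sq_mul_exp (n : ℕ) (θ : ℝ) :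
    (1 - (Complex.exp (θ * I))⁻¹ ^ 2) * Complex.exp (-((n : ℂ) * θ) * I) =
      2 * I * (Real.sin θ : ℂ) * Complex.exp (-(((n + 1 : ℕ) : ℂ) * θ) * I) := by
  have hsin : 2 * I * (Real.sin θ : ℂ) = Complex.exp (θ * I) - (Complex.exp (θ * I))⁻¹ := by
    rw [← Complex.exp_neg, ofReal_sin, ← neg_mul]
    linear_combination exp_neg_mul_I_sub_exp_mul_I θ
  rw [hsin, exp_neg_nat_mul_mul_I, exp_neg_nat_mul_mul_I]
  linear_combination (-(Complex.exp (θ * I))⁻¹ ^ n) *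
    mul_inv_cancel₀ (Complex.exp_ne_zero (θ * I))

/-- `∮_{|z| = r} f((z + z⁻¹)/2) (1 - z⁻²) z⁻ⁿ⁻¹ dz`, parametrised by `z = r e^{iθ}` and divided
by `i r⁻ⁿ`. -/
def chebContourU (f : ℂ → ℂ) (r : ℝ) (n : ℕ) : ℂ :=
  ∫ θ in (0:ℝ)..(2 * π), f (joukowski r θ) *
    (1 - ((r : ℂ) * Complex.exp ((θ : ℂ) * Complex.I))⁻¹ ^ 2) *
    Complex.exp (-((n : ℂ) * (θ : ℂ)) * Complex.I)

theorem circleIntegral_eq_chebContourU (f : ℂ → ℂ) (n : ℕ) {r : ℝ} (hr : r ≠ 0) :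
    (∮ z in C(0, r), f ((z + z⁻¹) / 2) * (1 - z⁻¹ ^ 2) * z⁻¹ ^ (n + 1)) =
      I * (r : ℂ)⁻¹ ^ n * chebContourU f r n := by
  rw [circleIntegral, chebContourU, ← intervalIntegral.integral_const_mul]
  refine intervalIntegral.integral_congr fun θ _ => ?_
  have hz : (r : ℂ) * Complex.exp (θ * I) ≠ 0 :=
    mul_ne_zero (ofReal_ne_zero.2 hr) (Complex.exp_ne_zero _)
  simp only [deriv_circleMap, circleMap, zero_add, smul_eq_mul, joukowski,
    exp_neg_nat_mul_mul_I]
  linear_combination (I * f ((r * Complex.exp (θ * I) + (r * Complex.exp (θ * I))⁻¹) / 2) *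
    (1 - (r * Complex.exp (θ * I))⁻¹ ^ 2) * (r * Complex.exp (θ * I))⁻¹ ^ n) *
    mul_inv_cancel₀ hz

theorem AnalyticOnBernstein.chebContourU_eq_pow_mul_chebContourU_one {f : ℂ → ℂ} {ρ : ℝ}
    (hf : AnalyticOnBernstein f ρ) (hρ : 1 ≤ ρ) (n : ℕ) :
    chebContourU f ρ n = (ρ : ℂ) ^ n * chebContourU f 1 n := by
  have hF : ∀ z ∈ Metric.closedBall 0 ρ \ Metric.ball 0 1,
      DifferentiableAt ℂ (fun z => f ((z + z⁻¹) / 2) * (1 - z⁻¹ ^ 2) * z⁻¹ ^ (n + 1)) z := by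
    rintro z ⟨hzρ, hz1⟩
    rw [mem_closedBall_zero_iff] at hzρ
    rw [mem_ball_zero_iff, not_lt] at hz1
    have hz : z ≠ 0 := norm_pos_iff.1 (one_pos.trans_le hz1)
    exact ((hf.differentiableAt_comp_add_inv_div_two hz1 hzρ).mul
      (((differentiableAt_inv hz).pow 2).const_sub 1)).mul ((differentiableAt_inv hz).pow _)
  have h := circleIntegral_eq_of_differentiable_on_annulus_off_countable one_pos hρ
    Set.countable_empty (fun z hz => (hF z hz).continuousAt.continuousWithinAt)
    fun z hz => hF z ⟨Metric.ball_subset_closedBall hz.1.1,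
      fun hz1 => hz.1.2 (Metric.ball_subset_closedBall hz1)⟩
  rw [circleIntegral_eq_chebContourU f n (by positivity),
    circleIntegral_eq_chebContourU f n one_ne_zero, ofReal_one, inv_one, one_pow, mul_one] at h
  rw [mul_assoc] at h
  have hρ0 : (ρ : ℂ) ≠ 0 := ofReal_ne_zero.2 (by positivity)
  rw [← mul_left_cancel₀ I_ne_zero h, ← mul_assoc, ← mul_pow, mul_inv_cancel₀ hρ0, one_pow,
    one_mul]

theorem chebContourU_one {f : ℂ → ℂ} (hf : Continuous fun θ : ℝ => f (Real.cos θ)) (n : ℕ) :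
    chebContourU f 1 n = 4 * ∫ θ in (0 : ℝ)..π,
      f (Real.cos θ) * (Real.sin θ : ℂ) * (Real.sin ((n + 1) * θ) : ℂ) := by
  have hodd : ∀ θ, f (Real.cos (2 * π - θ)) * (Real.sin (2 * π - θ) : ℂ) =
      -(f (Real.cos θ) * (Real.sin θ : ℂ)) := fun θ => by
    rw [Real.cos_two_pi_sub, Real.sin_two_pi_sub, ofReal_neg, mul_neg]
  have hfourier := integral_mul_exp_neg_nat_mul_of_reflect_neg
    (h := fun θ => f (Real.cos θ) * (Real.sin θ : ℂ))
    (hf.mul (continuous_ofReal.comp continuous_sin)) hodd (n + 1)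
  calc chebContourU f 1 n
    _ = 2 * I * ∫ θ in (0 : ℝ)..2 * π, f (Real.cos θ) * (Real.sin θ : ℂ) *
        Complex.exp (-(((n + 1 : ℕ) : ℂ) * θ) * I) := by
      rw [chebContourU, ← intervalIntegral.integral_const_mul]
      refine intervalIntegral.integral_congr fun θ _ => ?_
      rw [joukowski_one, ofReal_one, one_mul, mul_assoc, one_sub_exp_inv_sq_mul_exp]
      ring
    _ = 4 * ∫ θ in (0 : ℝ)..π,
        f (Real.cos θ) * (Real.sin θ : ℂ) * (Real.sin ((n + 1) * θ) : ℂ) := by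
      rw [hfourier]
      simp only [Nat.cast_add, Nat.cast_one]
      linear_combination (-4 * ∫ θ in (0 : ℝ)..π,
        f (Real.cos θ) * (Real.sin θ : ℂ) * (Real.sin ((n + 1) * θ) : ℂ)) * I_sq

/-- contour-integral expression for the Chebyshev coefficients
of the second kind of a function analytic inside and on the Bernstein ellipse. -/
theorem chebyshev_second_kind_contour_integral
    (ρ : ℝ) (hρ : 1 < ρ) (f : ℂ → ℂ) (hf : AnalyticOnBernstein f ρ) (n : ℕ) :
    chebCoeffU f n = (1 / (2 * (π : ℂ) * (ρ : ℂ) ^ n)) *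
      ∫ θ in (0:ℝ)..(2 * π),
        f (joukowski ρ θ) *
          (1 - ((ρ : ℂ) * Complex.exp ((θ : ℂ) * Complex.I))⁻¹ ^ 2) *
          Complex.exp (-((n : ℂ) * (θ : ℂ)) * Complex.I) := by
  have hc := hf.continuousOn_Icc hρ.le
  have hc_cos : Continuous fun θ : ℝ => f (Real.cos θ) :=
    hc.comp_continuous continuous_cos fun θ => ⟨neg_one_le_cos θ, cos_le_one θ⟩
  have hρ0 : (ρ : ℂ) ≠ 0 := ofReal_ne_zero.2 (by positivity)
  change _ = _ * chebContourU f ρ n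
  rw [chebCoeffU_eq_integral_sin_mul_sin hc, hf.chebContourU_eq_pow_mul_chebContourU_one hρ.le,
    chebContourU_one hc_cos]
  field_simp
  ring
end
end

section
/- Let 1 < R ≤ ∞, let f be analytic in every ellipse E_ρ with 1 ≤ ρ < R (i.e., f is analytic on the open region ∪_{1≤ρ<R} D̄_ρ), suppose f is not constant, and let n ≥ 0 be such that the Chebyshev coefficient a_n is nonzero. Then the condition number κ(n,ρ) = M(ρ)/(|a_n| ρ^n) is continuously differentiable in ρ on (1, R), and log κ(n,ρ) is a convex function of log ρ, i.e., s ↦ log κ(n, e^s) is convex on (0, log R). -/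
open Complex Real MeasureTheory Polynomial

noncomputable section

/-- The open region ∪_{1 ≤ ρ < R} D̄_ρ swept out by the Bernstein ellipses of
parameter 1 ≤ ρ < R (where R may be ∞). -/
def ellipseRegion (R : EReal) : Set ℂ :=
  {z | ∃ r θ : ℝ, 1 ≤ r ∧ (r : EReal) < R ∧ z = joukowski r θ}

/-!
Pull everything back along the Joukowski map `J u = (u + u⁻¹) / 2`: `M(ρ)` is twice the circle
average of `‖g‖` over `‖u‖ = ρ`, where `g = f ∘ J` is holomorphic on the annulus `1 < ‖u‖ < R`.
Since `aₙ ≠ 0`, `f` is not identically zero on `[-1, 1]`, so by continuity up to the unit circle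
`g` is not identically zero, and its zeros on each circle form a null set. Off that set
`r ↦ ‖g (r e^{iθ})‖` is differentiable with derivative bounded by `‖g'‖`, so differentiating
under the integral sign makes `M` of class `C¹`.

Log-convexity of `M` in `log ρ` is Hardy's convexity theorem. Fix `r` and the unimodular phase
`ω(θ)` with `g (r e^{iθ}) ω(θ) = ‖g (r e^{iθ})‖`. Then `G z = ⨍ g (z e^{iθ}) ω(θ) dθ` is
holomorphic, bounded by the circle average of `‖g‖` at radius `‖z‖`, and equal to it at `z = r`;
Hadamard's three-circles theorem for `G` (the three-lines theorem composed with `exp`) gives the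
convexity. Dividing by `‖aₙ‖ ρⁿ` only adds an affine function of `log ρ`.
-/

open Topology Filter Metric Set
open scoped RealInnerProductSpace

theorem HasDerivAt.norm {F : Type*} [NormedAddCommGroup F] [InnerProductSpace ℝ F]
    {c : ℝ → F} {c' : F} {r : ℝ} (hc : HasDerivAt c c' r) (h0 : c r ≠ 0) :
    HasDerivAt (fun t => ‖c t‖) (⟪c r, c'⟫ / ‖c r‖) r := by
  have h := hc.norm_sq.sqrt (by positivity)
  simp only [Real.sqrt_sq (norm_nonneg _)] at h
  convert h using 1
  field_simp

theorem hasDerivAt_circleMap_radius (c : ℂ) (r θ : ℝ) :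
    HasDerivAt (fun r : ℝ => circleMap c r θ) (cexp (θ * I)) r := by
  simpa [circleMap] using ((hasDerivAt_id r).ofReal_comp.mul_const (cexp (θ * I))).const_add c

theorem dist_circleMap_circleMap_radius (c : ℂ) (r r' θ : ℝ) :
    dist (circleMap c r θ) (circleMap c r' θ) = |r - r'| := by
  rw [dist_eq_norm, circleMap, circleMap, add_sub_add_left_eq_sub, ← sub_mul, norm_mul,
    norm_exp_ofReal_mul_I, mul_one, ← ofReal_sub, norm_real, Real.norm_eq_abs]

theorem circleMap_zero_norm_add_arg (z : ℂ) (θ : ℝ) :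
    circleMap 0 ‖z‖ (θ + arg z) = z * cexp (θ * I) := by
  conv_rhs => rw [← norm_mul_exp_arg_mul_I z]
  simp only [circleMap, zero_add, ofReal_add, add_mul, Complex.exp_add]
  ring

theorem circleAverage_eq_integral_mul_exp {E : Type*} [NormedAddCommGroup E] [NormedSpace ℝ E]
    (h : ℂ → E) (z : ℂ) :
    circleAverage h 0 ‖z‖ = (2 * π)⁻¹ • ∫ θ in 0..2 * π, h (z * cexp (θ * I)) := by
  simp only [circleAverage_eq_integral_add (arg z), circleMap_zero_norm_add_arg]

theorem IsCompact.exists_cthickening_subset_and_norm_le {α E : Type*} [PseudoMetricSpace α]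
    [ProperSpace α] [NormedAddCommGroup E] {K U : Set α} {h : α → E} (hK : IsCompact K)
    (hU : IsOpen U) (hKU : K ⊆ U) (hh : ContinuousOn h U) :
    ∃ δ > 0, ∃ C, ∀ w ∈ cthickening δ K, w ∈ U ∧ ‖h w‖ ≤ C := by
  obtain ⟨δ, hδ, hδU⟩ := hK.exists_cthickening_subset_open hU hKU
  obtain ⟨C, hC⟩ := hK.cthickening.exists_bound_of_continuousOn (hh.mono hδU)
  exact ⟨δ, hδ, C, fun w hw => ⟨hδU hw, hC w hw⟩⟩

section RadialDerivative

variable {g : ℂ → ℂ} {U : Set ℂ}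

theorem continuous_comp_circleMap (hg : ContinuousOn g U) {r : ℝ} (hr : sphere 0 |r| ⊆ U) :
    Continuous fun θ => g (circleMap 0 r θ) :=
  hg.comp_continuous (continuous_circleMap 0 r) fun θ => hr (circleMap_mem_sphere' 0 r θ)

/-- Where `g` vanishes this is `0`, not a derivative. -/
def radialDerivNorm (g : ℂ → ℂ) (r θ : ℝ) : ℝ :=
  ⟪g (circleMap 0 r θ), deriv g (circleMap 0 r θ) * cexp (θ * I)⟫ / ‖g (circleMap 0 r θ)‖

theorem hasDerivAt_norm_comp_circleMap_radius {r θ : ℝ}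
    (hg : DifferentiableAt ℂ g (circleMap 0 r θ)) (h0 : g (circleMap 0 r θ) ≠ 0) :
    HasDerivAt (fun t => ‖g (circleMap 0 t θ)‖) (radialDerivNorm g r θ) r :=
  (hg.hasDerivAt.comp r (hasDerivAt_circleMap_radius 0 r θ)).norm h0

theorem abs_radialDerivNorm_le (r θ : ℝ) :
    |radialDerivNorm g r θ| ≤ ‖deriv g (circleMap 0 r θ)‖ := by
  rw [radialDerivNorm, abs_div, abs_norm]
  refine div_le_of_le_mul₀ (norm_nonneg _) (norm_nonneg _) ?_
  calc _ ≤ ‖g (circleMap 0 r θ)‖ * ‖deriv g (circleMap 0 r θ) * cexp (θ * I)‖ :=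
        abs_real_inner_le_norm _ _
    _ = _ := by rw [norm_mul, norm_exp_ofReal_mul_I, mul_one, mul_comm]

theorem measurable_radialDerivNorm (hU : IsOpen U) (hg : DifferentiableOn ℂ g U) {r : ℝ}
    (hr : sphere 0 |r| ⊆ U) : Measurable (radialDerivNorm g r) := by
  have hg' := continuous_comp_circleMap hg.continuousOn hr
  have hdg := continuous_comp_circleMap (hg.deriv hU).continuousOn hr
  exact ((hg'.inner (hdg.mul (by fun_prop))).measurable).div (hg'.norm.measurable)

theorem exists_bound_deriv_near_sphere (hU : IsOpen U) (hg : DifferentiableOn ℂ g U) {r₀ : ℝ}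
    (hr₀ : sphere 0 |r₀| ⊆ U) :
    ∃ δ > 0, ∃ C, ∀ r ∈ ball r₀ δ, sphere 0 |r| ⊆ U ∧ ∀ θ, ‖deriv g (circleMap 0 r θ)‖ ≤ C := by
  obtain ⟨δ, hδ, C, hC⟩ := (isCompact_sphere (0 : ℂ) |r₀|).exists_cthickening_subset_and_norm_le
    hU hr₀ (hg.deriv hU).continuousOn
  have hnear : ∀ r ∈ ball r₀ δ, ∀ θ, circleMap 0 r θ ∈ cthickening δ (sphere 0 |r₀|) :=
    fun r hr θ => mem_cthickening_of_dist_le _ _ _ _ (circleMap_mem_sphere' 0 r₀ θ)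
      ((dist_circleMap_circleMap_radius 0 r r₀ θ).trans_le (mem_ball.1 hr).le)
  refine ⟨δ, hδ, C, fun r hr => ⟨?_, fun θ => (hC _ (hnear r hr θ)).2⟩⟩
  intro w hw
  obtain ⟨θ, rfl⟩ : w ∈ range (circleMap 0 r) := by rwa [range_circleMap]
  exact (hC _ (hnear r hr θ)).1

theorem hasDerivAt_integral_norm_comp_circleMap (hU : IsOpen U) (hg : DifferentiableOn ℂ g U)
    {r₀ : ℝ} (hr₀ : sphere 0 |r₀| ⊆ U) (h0 : ∀ᵐ θ, g (circleMap 0 r₀ θ) ≠ 0) :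
    HasDerivAt (fun r => ∫ θ in 0..2 * π, ‖g (circleMap 0 r θ)‖)
      (∫ θ in 0..2 * π, radialDerivNorm g r₀ θ) r₀ := by
  obtain ⟨δ, hδ, C, hC⟩ := exists_bound_deriv_near_sphere hU hg hr₀
  have hdiff : ∀ r ∈ ball r₀ δ, ∀ θ, DifferentiableAt ℂ g (circleMap 0 r θ) := fun r hr θ =>
    hg.differentiableAt (hU.mem_nhds ((hC r hr).1 (circleMap_mem_sphere' 0 r θ)))
  have hlip : ∀ θ, LipschitzOnWith (Real.nnabs C) (fun r => ‖g (circleMap 0 r θ)‖) (ball r₀ δ) :=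
    fun θ => by
      have := (convex_ball r₀ δ).lipschitzOnWith_of_nnnorm_hasDerivWithin_le (fun r hr =>
        ((hdiff r hr θ).hasDerivAt.comp r (hasDerivAt_circleMap_radius 0 r θ)).hasDerivWithinAt)
        fun r hr => by
          rw [← NNReal.coe_le_coe, coe_nnnorm, Real.coe_nnabs, norm_mul, norm_exp_ofReal_mul_I,
            mul_one]
          exact ((hC r hr).2 θ).trans (le_abs_self C)
      have h := lipschitzWith_one_norm.comp_lipschitzOnWith this
      rwa [one_mul] at h
  refine (intervalIntegral.hasDerivAt_integral_of_dominated_loc_of_lip (ball_mem_nhds r₀ hδ)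
    ?_ ?_ ?_ (.of_forall fun θ _ => hlip θ) (intervalIntegrable_const (c := C)) ?_).2
  · filter_upwards [ball_mem_nhds r₀ hδ] with r hr
    exact (continuous_comp_circleMap hg.continuousOn (hC r hr).1).norm.aestronglyMeasurable
  · exact (continuous_comp_circleMap hg.continuousOn hr₀).norm.intervalIntegrable _ _
  · exact (measurable_radialDerivNorm hU hg hr₀).aestronglyMeasurable
  · filter_upwards [h0] with θ hθ _
    exact hasDerivAt_norm_comp_circleMap_radius (hdiff r₀ (mem_ball_self hδ) θ) hθ

theorem continuousAt_integral_radialDerivNorm (hU : IsOpen U) (hg : DifferentiableOn ℂ g U)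
    {r₀ : ℝ} (hr₀ : sphere 0 |r₀| ⊆ U) (h0 : ∀ᵐ θ, g (circleMap 0 r₀ θ) ≠ 0) :
    ContinuousAt (fun r => ∫ θ in 0..2 * π, radialDerivNorm g r θ) r₀ := by
  obtain ⟨δ, hδ, C, hC⟩ := exists_bound_deriv_near_sphere hU hg hr₀
  refine intervalIntegral.continuousAt_of_dominated_interval (bound := fun _ => C) ?_ ?_
    intervalIntegrable_const ?_
  · filter_upwards [ball_mem_nhds r₀ hδ] with r hr
    exact (measurable_radialDerivNorm hU hg (hC r hr).1).aestronglyMeasurable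
  · filter_upwards [ball_mem_nhds r₀ hδ] with r hr
    exact .of_forall fun θ _ => (abs_radialDerivNorm_le r θ).trans ((hC r hr).2 θ)
  · filter_upwards [h0] with θ hθ _
    have hz : circleMap 0 r₀ θ ∈ U := hr₀ (circleMap_mem_sphere' 0 r₀ θ)
    have hcirc : ContinuousAt (fun r : ℝ => circleMap 0 r θ) r₀ :=
      (hasDerivAt_circleMap_radius 0 r₀ θ).continuousAt
    have hgc := (hg.differentiableAt (hU.mem_nhds hz)).continuousAt.comp
      (f := fun r : ℝ => circleMap 0 r θ) hcirc
    have hdgc := ((hg.deriv hU).differentiableAt (hU.mem_nhds hz)).continuousAt.comp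
      (f := fun r : ℝ => circleMap 0 r θ) hcirc
    exact (hgc.inner (hdgc.mul continuousAt_const)).div hgc.norm (norm_ne_zero_iff.2 hθ)

theorem contDiffOn_circleAverage_norm (hU : IsOpen U) (hg : DifferentiableOn ℂ g U) {S : Set ℝ}
    (hS : IsOpen S) (hSU : ∀ r ∈ S, sphere 0 |r| ⊆ U)
    (h0 : ∀ r ∈ S, ∀ᵐ θ, g (circleMap 0 r θ) ≠ 0) :
    ContDiffOn ℝ 1 (circleAverage (‖g ·‖) 0) S := by
  have hderiv : ∀ r ∈ S, HasDerivAt (circleAverage (‖g ·‖) 0)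
      ((2 * π)⁻¹ * ∫ θ in 0..2 * π, radialDerivNorm g r θ) r := fun r hr =>
    (hasDerivAt_integral_norm_comp_circleMap hU hg (hSU r hr) (h0 r hr)).const_mul _
  rw [show (1 : WithTop ℕ∞) = 0 + 1 from rfl, contDiffOn_succ_iff_deriv_of_isOpen hS]
  refine ⟨fun r hr => (hderiv r hr).differentiableAt.differentiableWithinAt, by simp, ?_⟩
  rw [contDiffOn_zero]
  refine fun r hr => ContinuousAt.continuousWithinAt ?_
  refine ((continuousAt_integral_radialDerivNorm hU hg (hSU r hr) (h0 r hr)).const_mul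
    (2 * π)⁻¹).congr ?_
  filter_upwards [hS.mem_nhds hr] with r' hr'
  exact (hderiv r' hr').deriv.symm

end RadialDerivative

open Complex.HadamardThreeLines in
theorem norm_le_rpow_mul_rpow_of_three_circles {G : ℂ → ℂ} {s₁ s₂ A B t : ℝ} {z : ℂ}
    (hG : DifferentiableOn ℂ G {w | ‖w‖ ∈ uIcc (rexp s₁) (rexp s₂)})
    (hA : ∀ w, ‖w‖ = rexp s₁ → ‖G w‖ ≤ A) (hB : ∀ w, ‖w‖ = rexp s₂ → ‖G w‖ ≤ B)
    (ht : t ∈ Icc (0 : ℝ) 1) (hz : ‖z‖ = rexp ((1 - t) * s₁ + t * s₂)) :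
    ‖G z‖ ≤ A ^ (1 - t) * B ^ t := by
  -- the strip `0 ≤ re w ≤ 1` is wrapped onto the annulus so that `re w = t` lands on `z`
  let ψ : ℂ → ℂ := fun w => z * cexp ((w - t) * (s₂ - s₁))
  have hψ : ∀ w, ‖ψ w‖ = rexp ((1 - w.re) * s₁ + w.re * s₂) := fun w => by
    simp only [ψ, norm_mul, Complex.norm_exp, hz, ← Real.exp_add]
    congr 1
    simp only [mul_re, sub_re, ofReal_re, sub_im, ofReal_im, sub_zero, sub_self, mul_zero]
    ring
  have hK : IsCompact {w : ℂ | ‖w‖ ∈ uIcc (rexp s₁) (rexp s₂)} :=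
    isCompact_of_isClosed_isBounded (isClosed_Icc.preimage continuous_norm)
      ((isBounded_closedBall (x := (0 : ℂ)) (r := rexp s₁ ⊔ rexp s₂)).subset
        fun w hw => mem_closedBall_zero_iff.2 hw.2)
  have hmaps : MapsTo ψ (verticalClosedStrip 0 1) {w | ‖w‖ ∈ uIcc (rexp s₁) (rexp s₂)} :=
    fun w hw => by
      show ‖ψ w‖ ∈ uIcc (rexp s₁) (rexp s₂)
      rw [hψ]
      exact Real.exp_monotone.mapsTo_uIcc ((convex_uIcc s₁ s₂) left_mem_uIcc right_mem_uIcc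
        (sub_nonneg.2 hw.2) hw.1 (by ring))
  have hdiff : DifferentiableOn ℂ (G ∘ ψ) (verticalClosedStrip 0 1) :=
    hG.comp (by fun_prop : Differentiable ℂ ψ).differentiableOn hmaps
  have hbdd : BddAbove ((norm ∘ G ∘ ψ) '' verticalClosedStrip 0 1) := by
    refine (hK.image_of_continuousOn
      (continuous_norm.comp_continuousOn hG.continuousOn)).bddAbove.mono ?_
    rintro _ ⟨w, hw, rfl⟩
    exact ⟨ψ w, hmaps hw, rfl⟩
  have h := norm_le_interp_of_mem_verticalClosedStrip₀₁' (G ∘ ψ) (z := (t : ℂ))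
    (show (t : ℂ).re ∈ Icc 0 1 by simpa using ht)
    (hdiff.mono (closure_minimal (preimage_mono Ioo_subset_Icc_self)
      (isClosed_Icc.preimage continuous_re))).diffContOnCl hbdd
    (fun w hw => hA _ (by rw [hψ, show w.re = 0 from hw]; simp))
    (fun w hw => hB _ (by rw [hψ, show w.re = 1 from hw]; simp))
  simpa [ψ] using h

theorem mul_cexp_neg_arg_mul_I (w : ℂ) : w * cexp (-(arg w) * I) = ‖w‖ :=
  calc w * cexp (-(arg w) * I) = ‖w‖ * cexp (arg w * I) * cexp (-(arg w) * I) := by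
        rw [norm_mul_exp_arg_mul_I]
    _ = ‖w‖ := by rw [mul_assoc, ← Complex.exp_add, neg_mul, add_neg_cancel, Complex.exp_zero,
        mul_one]

theorem convexOn_log_of_le_rpow_mul_rpow {S : Set ℝ} {h : ℝ → ℝ} (hS : Convex ℝ S)
    (hpos : ∀ x ∈ S, 0 < h x)
    (hle : ∀ x ∈ S, ∀ y ∈ S, ∀ t ∈ Icc (0 : ℝ) 1,
      h ((1 - t) * x + t * y) ≤ h x ^ (1 - t) * h y ^ t) :
    ConvexOn ℝ S fun x => Real.log (h x) := by
  refine ⟨hS, fun x hx y hy a b ha hb hab => ?_⟩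
  obtain rfl : a = 1 - b := by linarith
  have hb1 : b ∈ Icc (0 : ℝ) 1 := ⟨hb, by linarith⟩
  calc Real.log (h ((1 - b) • x + b • y))
      ≤ Real.log (h x ^ (1 - b) * h y ^ b) :=
        log_le_log (hpos _ (hS hx hy ha hb hab)) (hle x hx y hy b hb1)
    _ = (1 - b) • Real.log (h x) + b • Real.log (h y) := by
        rw [Real.log_mul (rpow_pos_of_pos (hpos x hx) _).ne' (rpow_pos_of_pos (hpos y hy) _).ne',
          Real.log_rpow (hpos x hx), Real.log_rpow (hpos y hy), smul_eq_mul, smul_eq_mul]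

theorem ConvexOn.log_mul_div_mul_exp_pow {S : Set ℝ} {h : ℝ → ℝ}
    (hh : ConvexOn ℝ S fun s => Real.log (h s)) (hpos : ∀ s ∈ S, 0 < h s) {a c : ℝ} (ha : 0 < a)
    (hc : 0 < c) (n : ℕ) :
    ConvexOn ℝ S fun s => Real.log (a * h s / (c * rexp s ^ n)) := by
  have haff : ConvexOn ℝ S fun s => Real.log a - Real.log c - n * s :=
    ⟨hh.1, fun x _ y _ p q _ _ hpq => le_of_eq (by
      simp only [smul_eq_mul]
      linear_combination (Real.log c - Real.log a) * hpq)⟩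
  refine (hh.add haff).congr fun s hs => ?_
  rw [Pi.add_apply, Real.log_div (mul_pos ha (hpos s hs)).ne' (by positivity),
    Real.log_mul ha.ne' (hpos s hs).ne', Real.log_mul hc.ne' (by positivity), Real.log_pow,
    Real.log_exp]
  ring

section HardyConvexity

variable {g : ℂ → ℂ} {U : Set ℂ}

theorem differentiableAt_integral_comp_mul_cexp_mul (hU : IsOpen U) (hg : DifferentiableOn ℂ g U)
    {ω : ℝ → ℂ} (hω : IntervalIntegrable ω volume 0 (2 * π)) {z₀ : ℂ} (hz₀ : sphere 0 ‖z₀‖ ⊆ U) :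
    DifferentiableAt ℂ (fun z => ∫ θ in 0..2 * π, g (z * cexp (θ * I)) * ω θ) z₀ := by
  obtain ⟨δ, hδ, C, hC⟩ := (isCompact_sphere (0 : ℂ) ‖z₀‖).exists_cthickening_subset_and_norm_le
    hU hz₀ (hg.deriv hU).continuousOn
  have hnear : ∀ z ∈ ball z₀ δ, ∀ θ : ℝ, z * cexp (θ * I) ∈ cthickening δ (sphere 0 ‖z₀‖) :=
    fun z hz θ => mem_cthickening_of_dist_le _ (z₀ * cexp (θ * I)) _ _
      (by simp [norm_exp_ofReal_mul_I])
      (by rw [dist_eq_norm, ← sub_mul, norm_mul, norm_exp_ofReal_mul_I, mul_one, ← dist_eq_norm]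
          exact (mem_ball.1 hz).le)
  have hcont : ∀ z ∈ ball z₀ δ, Continuous fun θ : ℝ => g (z * cexp (θ * I)) := fun z hz =>
    hg.continuousOn.comp_continuous (by fun_prop) fun θ => (hC _ (hnear z hz θ)).1
  have hω_meas := hω.def'.aestronglyMeasurable
  refine (intervalIntegral.hasDerivAt_integral_of_dominated_loc_of_deriv_le
    (F' := fun z θ => deriv g (z * cexp (θ * I)) * cexp (θ * I) * ω θ)
    (bound := fun θ => C * ‖ω θ‖) (ball_mem_nhds z₀ hδ) ?_ ?_ ?_ ?_ ?_ ?_).2.differentiableAt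
  · filter_upwards [ball_mem_nhds z₀ hδ] with z hz
    exact (hcont z hz).aestronglyMeasurable.mul hω_meas
  · exact hω.continuousOn_mul (hcont z₀ (mem_ball_self hδ)).continuousOn
  · refine (Continuous.aestronglyMeasurable ?_).mul hω_meas
    exact ((hg.deriv hU).continuousOn.comp_continuous (by fun_prop)
      fun θ => (hC _ (hnear z₀ (mem_ball_self hδ) θ)).1).mul (by fun_prop)
  · refine .of_forall fun θ _ z hz => ?_
    rw [norm_mul, norm_mul, norm_exp_ofReal_mul_I, mul_one]
    exact mul_le_mul_of_nonneg_right (hC _ (hnear z hz θ)).2 (norm_nonneg _)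
  · exact hω.norm.const_mul C
  · refine .of_forall fun θ _ z hz => ?_
    have hgz := hg.differentiableAt (hU.mem_nhds (hC _ (hnear z hz θ)).1)
    exact (hgz.hasDerivAt.comp z (hasDerivAt_mul_const (cexp (θ * I)))).mul_const (ω θ)

theorem circleAverage_norm_le_rpow_mul_rpow (hU : IsOpen U) (hg : DifferentiableOn ℂ g U)
    {s₁ s₂ t : ℝ} (hsU : {w : ℂ | ‖w‖ ∈ uIcc (rexp s₁) (rexp s₂)} ⊆ U) (ht : t ∈ Icc (0 : ℝ) 1) :
    circleAverage (‖g ·‖) 0 (rexp ((1 - t) * s₁ + t * s₂)) ≤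
      circleAverage (‖g ·‖) 0 (rexp s₁) ^ (1 - t) * circleAverage (‖g ·‖) 0 (rexp s₂) ^ t := by
  set r := rexp ((1 - t) * s₁ + t * s₂)
  set ω : ℝ → ℂ := fun θ => cexp (-(arg (g (circleMap 0 r θ))) * I)
  set G : ℂ → ℂ := fun z => (2 * π)⁻¹ * ∫ θ in 0..2 * π, g (z * cexp (θ * I)) * ω θ
  have hG_le : ∀ z, ‖G z‖ ≤ circleAverage (‖g ·‖) 0 ‖z‖ := fun z => by
    rw [circleAverage_eq_integral_mul_exp, smul_eq_mul, norm_mul, norm_real,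
      Real.norm_of_nonneg (by positivity)]
    refine mul_le_mul_of_nonneg_left ?_ (by positivity)
    refine (intervalIntegral.norm_integral_le_integral_norm (by positivity)).trans_eq ?_
    simp only [ω, norm_mul, norm_exp_ofReal_mul_I, ← ofReal_neg, mul_one]
  have hG_r : G r = circleAverage (‖g ·‖) 0 r := by
    simp only [G, ω, ← circleMap_zero, mul_cexp_neg_arg_mul_I, intervalIntegral.integral_ofReal,
      circleAverage, smul_eq_mul]
    push_cast
    ring
  have hsph : ∀ ρ ∈ uIcc (rexp s₁) (rexp s₂), sphere 0 |ρ| ⊆ U := fun ρ hρ w hw =>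
    hsU (show ‖w‖ ∈ uIcc _ _ by
      rwa [mem_sphere_zero_iff_norm.1 hw,
        abs_of_pos ((lt_min (Real.exp_pos _) (Real.exp_pos _)).trans_le hρ.1)])
  have hω : IntervalIntegrable ω volume 0 (2 * π) := by
    have hr : r ∈ uIcc (rexp s₁) (rexp s₂) := Real.exp_monotone.mapsTo_uIcc
      ((convex_uIcc s₁ s₂) left_mem_uIcc right_mem_uIcc (sub_nonneg.2 ht.2) ht.1 (by ring))
    have hmeas : Measurable ω :=
      measurable_exp.comp (((measurable_ofReal.comp (measurable_arg.comp
        (continuous_comp_circleMap hg.continuousOn (hsph r hr)).measurable)).neg).mul_const I)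
    exact (intervalIntegrable_const (c := (1 : ℂ))).mono_fun hmeas.aestronglyMeasurable
      (.of_forall fun θ => by simp [ω, ← ofReal_neg, norm_exp_ofReal_mul_I])
  have hGdiff : DifferentiableOn ℂ G {w : ℂ | ‖w‖ ∈ uIcc (rexp s₁) (rexp s₂)} :=
    fun z hz => ((differentiableAt_integral_comp_mul_cexp_mul hU hg hω
      (by simpa using hsph ‖z‖ hz)).const_mul _).differentiableWithinAt
  have h := norm_le_rpow_mul_rpow_of_three_circles hGdiff
    (fun w hw => (hG_le w).trans_eq (by rw [hw])) (fun w hw => (hG_le w).trans_eq (by rw [hw]))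
    ht (z := r) (by rw [norm_real, Real.norm_of_nonneg (Real.exp_pos _).le])
  rwa [hG_r, norm_real, Real.norm_of_nonneg
    (circleAverage_nonneg_of_nonneg fun _ _ => norm_nonneg _)] at h

theorem convexOn_log_circleAverage_norm_comp_exp (hU : IsOpen U) (hg : DifferentiableOn ℂ g U)
    {S : Set ℝ} (hS : S.OrdConnected) (hSU : {w : ℂ | ‖w‖ ∈ S} ⊆ U)
    (hpos : ∀ r ∈ S, 0 < circleAverage (‖g ·‖) 0 r) :
    ConvexOn ℝ (rexp ⁻¹' S) fun s => Real.log (circleAverage (‖g ·‖) 0 (rexp s)) :=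
  convexOn_log_of_le_rpow_mul_rpow (hS.preimage_mono Real.exp_monotone).convex
    (fun _ hs => hpos _ hs) fun _ hx _ hy _ ht =>
      circleAverage_norm_le_rpow_mul_rpow hU hg (fun _ hw => hSU (hS.uIcc_subset hx hy hw)) ht

end HardyConvexity

theorem AnalyticOnNhd.ae_ne_zero_comp_circleMap {g : ℂ → ℂ} {U : Set ℂ} (hg : AnalyticOnNhd ℂ g U)
    (hU : IsConnected U) {x : ℂ} (hxU : x ∈ U) (hx : g x ≠ 0) {r : ℝ} (hr : r ≠ 0)
    (hsph : sphere 0 |r| ⊆ U) :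
    ∀ᵐ θ, g (circleMap 0 r θ) ≠ 0 := by
  have h := circleMap_preimage_codiscrete hr
    (codiscreteWithin_mono hsph (hg.preimage_zero_mem_codiscreteWithin hx hxU hU))
  have h' := ae_restrict_le_codiscreteWithin (μ := volume) MeasurableSet.univ h
  rwa [Measure.restrict_univ] at h'

theorem circleAverage_norm_pos {g : ℂ → ℂ} {r : ℝ} (hg : Continuous fun θ => g (circleMap 0 r θ))
    (h0 : ∀ᵐ θ, g (circleMap 0 r θ) ≠ 0) :
    0 < circleAverage (‖g ·‖) 0 r := by
  refine smul_pos (by positivity) ?_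
  rw [intervalIntegral.integral_pos_iff_support_of_nonneg_ae'
    (.of_forall fun θ => norm_nonneg _) (hg.norm.intervalIntegrable _ _)]
  refine ⟨by positivity, ?_⟩
  rw [ae_iff] at h0
  rw [inter_comm, measure_inter_conull (by simpa [Function.support, compl_ofPred] using h0),
    Real.volume_Ioc]
  simp [pi_pos]

theorem isPreconnected_setOf_norm_mem {S : Set ℝ} (hS : IsPreconnected S) (hS0 : ∀ r ∈ S, 0 ≤ r) :
    IsPreconnected {u : ℂ | ‖u‖ ∈ S} := by
  have h : {u : ℂ | ‖u‖ ∈ S} = (fun p : ℝ × ℝ => (p.1 : ℂ) * cexp (p.2 * I)) '' S ×ˢ univ := by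
    ext u
    refine ⟨fun hu => ⟨(‖u‖, arg u), ⟨hu, trivial⟩, norm_mul_exp_arg_mul_I u⟩, ?_⟩
    rintro ⟨p, ⟨hp, -⟩, rfl⟩
    simpa [norm_exp_ofReal_mul_I, abs_of_nonneg (hS0 _ hp)] using hp
  rw [h]
  exact (hS.prod isPreconnected_univ).image _ (by fun_prop)

def joukowskiMap (u : ℂ) : ℂ := (u + u⁻¹) / 2

theorem joukowski_eq_joukowskiMap (r θ : ℝ) : joukowski r θ = joukowskiMap (circleMap 0 r θ) := by
  rw [joukowski, joukowskiMap, circleMap_zero]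

theorem analyticAt_joukowskiMap {u : ℂ} (hu : u ≠ 0) : AnalyticAt ℂ joukowskiMap u :=
  ((analyticAt_id.add (analyticAt_id.inv hu)).div analyticAt_const two_ne_zero)

theorem joukowskiMap_circleMap_one (θ : ℝ) : joukowskiMap (circleMap 0 1 θ) = Real.cos θ := by
  rw [joukowskiMap, circleMap_zero, ofReal_one, one_mul, ← Complex.exp_neg, ofReal_cos, Complex.cos,
    neg_mul]

theorem Mfun_eq_two_mul_circleAverage (f : ℂ → ℂ) (ρ : ℝ) :
    Mfun f ρ = 2 * circleAverage (fun u => ‖f (joukowskiMap u)‖) 0 ρ := by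
  simp only [Mfun, circleAverage, smul_eq_mul, joukowski_eq_joukowskiMap]
  field_simp

theorem chebCoeffT_eq_zero_of_forall_eq_zero {f : ℂ → ℂ} (hf : ∀ x ∈ Icc (-1 : ℝ) 1, f x = 0)
    (n : ℕ) : chebCoeffT f n = 0 := by
  rw [chebCoeffT, intervalIntegral.integral_congr (g := 0) fun x hx => by
    rw [hf x (by rwa [uIcc_of_le (by norm_num)] at hx), zero_mul, Pi.zero_apply]]
  simp

def admissibleRadii (R : EReal) : Set ℝ := {ρ : ℝ | 1 < ρ ∧ (ρ : EReal) < R}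

theorem isOpen_admissibleRadii (R : EReal) : IsOpen (admissibleRadii R) :=
  (isOpen_lt continuous_const continuous_id).inter
    (isOpen_lt continuous_coe_real_ereal continuous_const)

theorem ordConnected_admissibleRadii (R : EReal) : (admissibleRadii R).OrdConnected :=
  ordConnected_Ioi.inter (ordConnected_Iio.preimage_mono EReal.coe_strictMono.monotone)

theorem joukowskiMap_mem_ellipseRegion {R : EReal} {u : ℂ} (hu : ‖u‖ ∈ admissibleRadii R) :
    joukowskiMap u ∈ ellipseRegion R :=
  ⟨‖u‖, arg u, hu.1.le, hu.2, by rw [joukowski_eq_joukowskiMap, circleMap_zero,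
    norm_mul_exp_arg_mul_I]⟩

theorem exp_preimage_admissibleRadii (R : EReal) :
    rexp ⁻¹' admissibleRadii R = {s : ℝ | 0 < s ∧ ((rexp s : ℝ) : EReal) < R} := by
  ext s
  simp [admissibleRadii, Real.one_lt_exp_iff]

theorem sphere_subset_setOf_norm_mem_admissibleRadii {R : EReal} {r : ℝ}
    (hr : r ∈ admissibleRadii R) : sphere (0 : ℂ) |r| ⊆ {u : ℂ | ‖u‖ ∈ admissibleRadii R} :=
  fun w hw => by
    show ‖w‖ ∈ admissibleRadii R
    rwa [mem_sphere_zero_iff_norm.1 hw, abs_of_pos (one_pos.trans hr.1)]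

theorem analyticOnNhd_comp_joukowskiMap {R : EReal} {f : ℂ → ℂ}
    (hf : ∀ z ∈ ellipseRegion R, AnalyticAt ℂ f z) :
    AnalyticOnNhd ℂ (fun u => f (joukowskiMap u)) {u : ℂ | ‖u‖ ∈ admissibleRadii R} :=
  fun _ hu => (hf _ (joukowskiMap_mem_ellipseRegion hu)).comp
    (analyticAt_joukowskiMap (norm_pos_iff.1 (one_pos.trans hu.1)))

theorem ofReal_mem_ellipseRegion {R : EReal} (hR : 1 < R) {x : ℝ} (hx : x ∈ Icc (-1 : ℝ) 1) :
    (x : ℂ) ∈ ellipseRegion R :=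
  ⟨1, arccos x, le_rfl, by exact_mod_cast hR, by
    rw [joukowski_eq_joukowskiMap, joukowskiMap_circleMap_one, cos_arccos hx.1 hx.2]⟩

theorem exists_joukowskiMap_ne_zero_of_chebCoeffT_ne_zero {R : EReal} (hR : 1 < R) {f : ℂ → ℂ}
    (hf : ∀ x ∈ Icc (-1 : ℝ) 1, ContinuousAt f x) {n : ℕ} (han : chebCoeffT f n ≠ 0) :
    ∃ u : ℂ, ‖u‖ ∈ admissibleRadii R ∧ f (joukowskiMap u) ≠ 0 := by
  by_contra! h
  refine han (chebCoeffT_eq_zero_of_forall_eq_zero (fun x hx => ?_) n)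
  -- `x = J (e^{iθ})` is the limit of `J (r e^{iθ})` as `r → 1⁺`, where `f ∘ J` vanishes
  set J : ℝ → ℂ := fun r => joukowskiMap (circleMap 0 r (arccos x))
  have hJ : ContinuousAt J 1 :=
    (analyticAt_joukowskiMap (circleMap_ne_center one_ne_zero)).continuousAt.comp
      (f := fun r : ℝ => circleMap 0 r (arccos x)) (hasDerivAt_circleMap_radius 0 1 _).continuousAt
  have hJ1 : J 1 = x := by
    show joukowskiMap (circleMap 0 1 (arccos x)) = x
    rw [joukowskiMap_circleMap_one, cos_arccos hx.1 hx.2]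
  have hlim : Tendsto (fun r => f (J r)) (𝓝[>] 1) (𝓝 (f x)) :=
    ((hf x hx).tendsto.comp (hJ1 ▸ hJ.tendsto)).mono_left nhdsWithin_le_nhds
  obtain ⟨q, h1q, hqR⟩ := EReal.lt_iff_exists_real_btwn.1 hR
  refine tendsto_nhds_unique hlim (tendsto_const_nhds.congr' ?_)
  filter_upwards [Ioo_mem_nhdsGT (show (1 : ℝ) < q by exact_mod_cast h1q)] with r hr
  refine (h _ ?_).symm
  rw [norm_circleMap_zero, abs_of_pos (one_pos.trans hr.1)]
  exact ⟨hr.1, (EReal.coe_lt_coe_iff.2 hr.2).trans hqR⟩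

theorem ae_ne_zero_comp_joukowskiMap_circleMap {R : EReal} (hR : 1 < R) {f : ℂ → ℂ}
    (hf : ∀ z ∈ ellipseRegion R, AnalyticAt ℂ f z) {n : ℕ} (han : chebCoeffT f n ≠ 0) {r : ℝ}
    (hr : r ∈ admissibleRadii R) :
    ∀ᵐ θ, f (joukowskiMap (circleMap 0 r θ)) ≠ 0 := by
  obtain ⟨u, huA, hu⟩ := exists_joukowskiMap_ne_zero_of_chebCoeffT_ne_zero hR
    (fun x hx => (hf _ (ofReal_mem_ellipseRegion hR hx)).continuousAt) han
  exact (analyticOnNhd_comp_joukowskiMap hf).ae_ne_zero_comp_circleMap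
    ⟨⟨u, huA⟩, isPreconnected_setOf_norm_mem (ordConnected_admissibleRadii R).isPreconnected
      fun ρ hρ => (one_pos.trans hρ.1).le⟩
    huA hu (one_pos.trans hr.1).ne' (sphere_subset_setOf_norm_mem_admissibleRadii hr)

theorem condition_number_contDiff_and_logConvex_general
    (R : EReal) (hR : 1 < R) (f : ℂ → ℂ)
    (hf : ∀ z ∈ ellipseRegion R, AnalyticAt ℂ f z)
    (n : ℕ) (han : chebCoeffT f n ≠ 0) :
    ContDiffOn ℝ 1 (fun ρ : ℝ => Mfun f ρ / (‖chebCoeffT f n‖ * ρ ^ n))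
      {ρ : ℝ | 1 < ρ ∧ (ρ : EReal) < R} ∧
    ConvexOn ℝ {s : ℝ | 0 < s ∧ ((Real.exp s : ℝ) : EReal) < R}
      (fun s => Real.log
        (Mfun f (Real.exp s) / (‖chebCoeffT f n‖ * Real.exp s ^ n))) := by
  have hA : IsOpen {u : ℂ | ‖u‖ ∈ admissibleRadii R} :=
    (isOpen_admissibleRadii R).preimage continuous_norm
  have hg := (analyticOnNhd_comp_joukowskiMap hf).differentiableOn
  have h0 : ∀ r ∈ admissibleRadii R, ∀ᵐ θ, f (joukowskiMap (circleMap 0 r θ)) ≠ 0 :=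
    fun r hr => ae_ne_zero_comp_joukowskiMap_circleMap hR hf han hr
  have hpos : ∀ r ∈ admissibleRadii R, 0 < circleAverage (fun u => ‖f (joukowskiMap u)‖) 0 r :=
    fun r hr => circleAverage_norm_pos
      (continuous_comp_circleMap hg.continuousOn (sphere_subset_setOf_norm_mem_admissibleRadii hr))
      (h0 r hr)
  have hc : 0 < ‖chebCoeffT f n‖ := norm_pos_iff.2 han
  simp only [Mfun_eq_two_mul_circleAverage]
  refine ⟨?_, ?_⟩
  · refine ((contDiffOn_circleAverage_norm hA hg (isOpen_admissibleRadii R)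
      (fun r hr => sphere_subset_setOf_norm_mem_admissibleRadii hr) h0).const_smul (2 : ℝ)).div
      (by fun_prop) fun ρ hρ => mul_ne_zero hc.ne' (pow_ne_zero n (one_pos.trans hρ.1).ne')
  · rw [← exp_preimage_admissibleRadii]
    exact (convexOn_log_circleAverage_norm_comp_exp hA hg (ordConnected_admissibleRadii R)
      subset_rfl hpos).log_mul_div_mul_exp_pow (fun s hs => hpos _ hs) two_pos hc n

/-- for a nonconstant f with aₙ ≠ 0, the condition number
κ(n,ρ) = M(ρ)/(|aₙ|ρⁿ) is continuously differentiable in ρ on (1, R), and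
log κ(n,ρ) is a convex function of log ρ. -/
theorem condition_number_contDiff_and_logConvex
    (R : EReal) (hR : 1 < R) (f : ℂ → ℂ)
    (hf : ∀ z ∈ ellipseRegion R, AnalyticAt ℂ f z)
    (hnc : ¬ ∃ c : ℂ, ∀ z ∈ ellipseRegion R, f z = c)
    (n : ℕ) (han : chebCoeffT f n ≠ 0) :
    ContDiffOn ℝ 1 (fun ρ : ℝ => Mfun f ρ / (‖chebCoeffT f n‖ * ρ ^ n))
      {ρ : ℝ | 1 < ρ ∧ (ρ : EReal) < R} ∧
    ConvexOn ℝ {s : ℝ | 0 < s ∧ ((Real.exp s : ℝ) : EReal) < R}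
      (fun s => Real.log
        (Mfun f (Real.exp s) / (‖chebCoeffT f n‖ * Real.exp s ^ n))) :=
  condition_number_contDiff_and_logConvex_general R hR f hf n han
end
end
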